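/- arXiv:math/0309113 — 5 statements merged into one kernel-verified Lean document; each statement's English description precedes it below -/
import Mathlib

section
/- Every bounded derivative is Lebesgue integrable and its indefinite Lebesgue integral recovers the primitive: if F is differentiable on [a,b] with F' bounded, then F' is Lebesgue integrable on [a,b] and ∫ₐˣ F' dμ = F(x) − F(a) for all x in [a,b]. -/
/-!
On `[a, b)` the derivative `f` agrees with the right derivative `x ↦ derivWithin F (Ici x) x`,
which is Borel measurable for an arbitrary `F`; so `f` is a.e. strongly measurable on `[a, b]`,
hence integrable when bounded, and the fundamental theorem of calculus for right derivatives
with integrable derivative applies on every `[a, x]`.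
-/

open Set MeasureTheory intervalIntegral

variable {E : Type*} [NormedAddCommGroup E] [NormedSpace ℝ E] {F f : ℝ → E} {a b : ℝ}

theorem HasDerivWithinAt.Ici_of_Icc {f' : E} {x : ℝ} (h : HasDerivWithinAt F f' (Icc a b) x)
    (hx : x ∈ Ico a b) : HasDerivWithinAt F f' (Ici x) x :=
  h.mono_of_mem_nhdsWithin (Icc_mem_nhdsGE_of_mem hx)

variable [CompleteSpace E]

theorem aestronglyMeasurable_of_hasDerivWithinAt_Icc
    (hF : ∀ x ∈ Icc a b, HasDerivWithinAt F (f x) (Icc a b) x) :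
    AEStronglyMeasurable f (volume.restrict (Icc a b)) := by
  rw [← Measure.restrict_congr_set Ico_ae_eq_Icc]
  refine (stronglyMeasurable_derivWithin_Ici F).aestronglyMeasurable.congr
    (ae_restrict_of_forall_mem measurableSet_Ico fun x hx => ?_)
  exact ((hF x (Ico_subset_Icc_self hx)).Ici_of_Icc hx).derivWithin
    (uniqueDiffOn_Ici x x self_mem_Ici)

theorem integrableOn_Icc_of_hasDerivWithinAt_of_norm_le
    (hF : ∀ x ∈ Icc a b, HasDerivWithinAt F (f x) (Icc a b) x) {M : ℝ}
    (hM : ∀ x ∈ Icc a b, ‖f x‖ ≤ M) : IntegrableOn f (Icc a b) :=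
  IntegrableOn.of_bound measure_Icc_lt_top (aestronglyMeasurable_of_hasDerivWithinAt_Icc hF) M
    (ae_restrict_of_forall_mem measurableSet_Icc hM)

theorem integral_eq_sub_of_hasDerivWithinAt_Icc (hab : a ≤ b)
    (hF : ∀ x ∈ Icc a b, HasDerivWithinAt F (f x) (Icc a b) x)
    (hint : IntegrableOn f (Icc a b)) : ∫ t in a..b, f t = F b - F a :=
  integral_eq_sub_of_hasDeriv_right_of_le hab (fun x hx => (hF x hx).continuousWithinAt)
    (fun x hx => ((hF x (Ioo_subset_Icc_self hx)).Ici_of_Icc (Ioo_subset_Ico_self hx)).Ioi_of_Ici)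
    ((intervalIntegrable_iff_integrableOn_Icc_of_le hab).2 hint)

theorem bounded_derivative_lebesgue_general (a b : ℝ) (F f : ℝ → ℝ)
    (hF : ∀ x ∈ Icc a b, HasDerivWithinAt F (f x) (Icc a b) x)
    (hbd : ∃ M : ℝ, ∀ x ∈ Icc a b, |f x| ≤ M) :
    IntegrableOn f (Icc a b) volume ∧
    ∀ x ∈ Icc a b, ∫ t in a..x, f t = F x - F a := by
  obtain ⟨M, hM⟩ := hbd
  have hint : IntegrableOn f (Icc a b) := integrableOn_Icc_of_hasDerivWithinAt_of_norm_le hF hM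
  refine ⟨hint, fun x hx => ?_⟩
  have hsub : Icc a x ⊆ Icc a b := Icc_subset_Icc_right hx.2
  exact integral_eq_sub_of_hasDerivWithinAt_Icc hx.1 (fun y hy => (hF y (hsub hy)).mono hsub)
    (hint.mono_set hsub)

/-- Every bounded derivative is Lebesgue integrable and the indefinite Lebesgue
integral recovers the primitive. -/
theorem bounded_derivative_lebesgue (a b : ℝ) (hab : a ≤ b) (F f : ℝ → ℝ)
    (hF : ∀ x ∈ Icc a b, HasDerivWithinAt F (f x) (Icc a b) x)
    (hbd : ∃ M : ℝ, ∀ x ∈ Icc a b, |f x| ≤ M) :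
    IntegrableOn f (Icc a b) volume ∧
    ∀ x ∈ Icc a b, ∫ t in a..x, f t = F x - F a :=
  bounded_derivative_lebesgue_general a b F f hF hbd
end

section
/- If F : [a,b] → ℝ is absolutely continuous and F'(x) = 0 for almost every x in [a,b], then F is constant on [a,b]. -/
open Set MeasureTheory

/-- `F` is absolutely continuous on `[a, b]`: for every `ε > 0` there is `δ > 0` such that
for every finite collection of non-overlapping subintervals `[c k, d k]` of `[a, b]` with
total length `< δ`, the sum of `|F (d k) - F (c k)|` is `< ε`. -/
def AbsolutelyContinuousOn (F : ℝ → ℝ) (a b : ℝ) : Prop :=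
  ∀ ε > (0 : ℝ), ∃ δ > (0 : ℝ), ∀ n : ℕ, ∀ c d : ℕ → ℝ,
    (∀ k, k < n → a ≤ c k ∧ c k ≤ d k ∧ d k ≤ b) →
    (∀ j k, j < n → k < n → j ≠ k → Set.Ioo (c j) (d j) ∩ Set.Ioo (c k) (d k) = ∅) →
    (∑ k ∈ Finset.range n, (d k - c k)) < δ →
    (∑ k ∈ Finset.range n, |F (d k) - F (c k)|) < ε

theorem AC.continuousOn {F : ℝ → ℝ} {a b : ℝ} (hAC : AbsolutelyContinuousOn F a b) :
    ContinuousOn F (Icc a b) := by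
  rw [Metric.continuousOn_iff]
  intro x hx ε hε
  obtain ⟨δ, hδ, H⟩ := hAC ε hε
  refine ⟨δ, hδ, fun y hy hxy => ?_⟩
  have key := H 1 (fun _ => min x y) (fun _ => max x y)
    (fun k _ => ⟨le_min hx.1 hy.1, min_le_max, max_le hx.2 hy.2⟩)
    (fun j k hj hk hjk => absurd (by omega : j = k) hjk)
    (by
      simp only [Finset.sum_range_one]
      rw [max_sub_min_eq_abs, abs_sub_comm, ← Real.dist_eq, dist_comm]
      exact hxy)
  simp only [Finset.sum_range_one] at key
  rw [Real.dist_eq]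
  have heq : |F y - F x| = |F (max x y) - F (min x y)| := by
    rcases le_total x y with h | h
    · rw [max_eq_right h, min_eq_left h]
    · rw [max_eq_left h, min_eq_right h, abs_sub_comm]
  rw [heq]; exact key

theorem comp_eq_Ioo {U : Set ℝ} (hU : IsOpen U) {x : ℝ} (hx : x ∈ U) {l u : ℝ}
    (hb : connectedComponentIn U x ⊆ Ioo l u) :
    connectedComponentIn U x
      = Ioo (sInf (connectedComponentIn U x)) (sSup (connectedComponentIn U x)) := by
  set C := connectedComponentIn U x with hC
  have hCo : IsOpen C := hU.connectedComponentIn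
  have hne : C.Nonempty := ⟨x, mem_connectedComponentIn hx⟩
  have hord : C.OrdConnected := isPreconnected_connectedComponentIn.ordConnected
  have hbdd : BddBelow C := ⟨l, fun y hy => (hb hy).1.le⟩
  have hbdd' : BddAbove C := ⟨u, fun y hy => (hb hy).2.le⟩
  apply Subset.antisymm
  · intro y hy
    obtain ⟨r, hr, hball⟩ := Metric.isOpen_iff.1 hCo y hy
    have h1 : y - r / 2 ∈ C := hball (by
      rw [Metric.mem_ball, Real.dist_eq]
      have : y - r / 2 - y = -(r / 2) := by ring
      rw [this, abs_neg, abs_of_nonneg (by linarith)]; linarith)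
    have h2 : y + r / 2 ∈ C := hball (by
      rw [Metric.mem_ball, Real.dist_eq]
      have : y + r / 2 - y = r / 2 := by ring
      rw [this, abs_of_nonneg (by linarith)]; linarith)
    exact ⟨lt_of_le_of_lt (csInf_le hbdd h1) (by linarith),
      lt_of_lt_of_le (by linarith) (le_csSup hbdd' h2)⟩
  · intro z hz
    obtain ⟨y1, hy1, hy1z⟩ := exists_lt_of_csInf_lt hne hz.1
    obtain ⟨y2, hy2, hy2z⟩ := exists_lt_of_lt_csSup hne hz.2
    exact hord.out hy1 hy2 ⟨hy1z.le, hy2z.le⟩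

theorem Ioo_inter_Ioo_of_sub {c₁ d₁ c₂ d₂ m₁ M₁ m₂ M₂ : ℝ}
    (hdis : Ioo c₁ d₁ ∩ Ioo c₂ d₂ = ∅)
    (h1 : Ioo m₁ M₁ ⊆ Icc c₁ d₁) (h2 : Ioo m₂ M₂ ⊆ Icc c₂ d₂) :
    Ioo m₁ M₁ ∩ Ioo m₂ M₂ = ∅ := by
  by_contra h
  obtain ⟨z, hz1, hz2⟩ := Set.nonempty_iff_ne_empty.2 h
  set η := min (min (z - m₁) (M₁ - z)) (min (z - m₂) (M₂ - z)) with hη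
  have hηpos : 0 < η := by
    simp only [hη, lt_min_iff]
    exact ⟨⟨by linarith [hz1.1], by linarith [hz1.2]⟩, ⟨by linarith [hz2.1], by linarith [hz2.2]⟩⟩
  have hη1 : η ≤ z - m₁ := le_trans (min_le_left _ _) (min_le_left _ _)
  have hη2 : η ≤ M₁ - z := le_trans (min_le_left _ _) (min_le_right _ _)
  have hη3 : η ≤ z - m₂ := le_trans (min_le_right _ _) (min_le_left _ _)
  have hη4 : η ≤ M₂ - z := le_trans (min_le_right _ _) (min_le_right _ _)
  have ha1 : z - η / 2 ∈ Icc c₁ d₁ := h1 ⟨by linarith, by linarith⟩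
  have hb1 : z + η / 2 ∈ Icc c₁ d₁ := h1 ⟨by linarith, by linarith⟩
  have ha2 : z - η / 2 ∈ Icc c₂ d₂ := h2 ⟨by linarith, by linarith⟩
  have hb2 : z + η / 2 ∈ Icc c₂ d₂ := h2 ⟨by linarith, by linarith⟩
  have : z ∈ Ioo c₁ d₁ ∩ Ioo c₂ d₂ :=
    ⟨⟨by linarith [ha1.1], by linarith [hb1.2]⟩, ⟨by linarith [ha2.1], by linarith [hb2.2]⟩⟩
  rw [hdis] at this
  exact this

theorem luzinN {F : ℝ → ℝ} {a b : ℝ} (hab : a ≤ b) (hAC : AbsolutelyContinuousOn F a b)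
    {Z : Set ℝ} (hZab : Z ⊆ Icc a b) (hZ : volume Z = 0) : volume (F '' Z) = 0 := by
  classical
  have hcont := AC.continuousOn hAC
  have key : ∀ ε : ℝ, 0 < ε → volume (F '' Z) ≤ ENNReal.ofReal ε := by
    intro ε hε
    obtain ⟨δ, hδ, H⟩ := hAC ε hε
    obtain ⟨U, hZU, hUopen, hUlt⟩ := Set.exists_isOpen_lt_of_lt Z (ENNReal.ofReal δ)
      (by rw [hZ]; exact ENNReal.ofReal_pos.2 hδ)
    set V := U ∩ Ioo (a - 1) (b + 1) with hVdef
    have hVopen : IsOpen V := hUopen.inter isOpen_Ioo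
    have hZV : Z ⊆ V := fun z hz =>
      ⟨hZU hz, ⟨by linarith [(hZab hz).1], by linarith [(hZab hz).2]⟩⟩
    have hVlt : volume V < ENNReal.ofReal δ :=
      lt_of_le_of_lt (measure_mono inter_subset_left) hUlt
    have hVbd : V ⊆ Ioo (a - 1) (b + 1) := inter_subset_right
    let e : ℕ → ℚ := fun n => (Denumerable.eqv ℚ).symm n
    have he : Function.Surjective e := (Denumerable.eqv ℚ).symm.surjective
    set Comp : ℕ → Set ℝ := fun n => connectedComponentIn V ((e n : ℝ)) with hCompdef
    set good : ℕ → Prop := fun n => ((e n : ℝ)) ∈ V ∧ ∀ m, m < n → Comp m ≠ Comp n with hgooddef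
    set c : ℕ → ℝ := fun n => if good n then sInf (Comp n) else 0 with hcdef
    set d : ℕ → ℝ := fun n => if good n then sSup (Comp n) else 0 with hddef
    have hcomp : ∀ n, good n → Comp n = Ioo (c n) (d n) := by
      intro n hn
      simp only [hcdef, hddef, if_pos hn]
      exact comp_eq_Ioo hVopen hn.1 ((connectedComponentIn_subset V _).trans hVbd)
    have hIooV : ∀ n, Ioo (c n) (d n) ⊆ V := by
      intro n
      by_cases hn : good n
      · rw [← hcomp n hn]; exact connectedComponentIn_subset V _
      · simp only [hcdef, hddef, if_neg hn, Set.Ioo_self]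
        exact empty_subset _
    have hcover : V = ⋃ n, Ioo (c n) (d n) := by
      apply Subset.antisymm
      · intro x hx
        set Cx := connectedComponentIn V x with hCx
        have hxCx : x ∈ Cx := mem_connectedComponentIn hx
        have hCxIoo : Cx = Ioo (sInf Cx) (sSup Cx) :=
          comp_eq_Ioo hVopen hx ((connectedComponentIn_subset V _).trans hVbd)
        have hxIoo : x ∈ Ioo (sInf Cx) (sSup Cx) := hCxIoo ▸ hxCx
        obtain ⟨q, hq1, hq2⟩ := exists_rat_btwn hxIoo.1
        have hqCx : (q : ℝ) ∈ Cx := hCxIoo ▸ ⟨hq1, hq2.trans hxIoo.2⟩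
        have hS : ∃ m, (e m : ℝ) ∈ Cx := by
          obtain ⟨m, hm⟩ := he q
          exact ⟨m, by rw [hm]; exact hqCx⟩
        let n₀ := Nat.find hS
        have hn₀ : (e n₀ : ℝ) ∈ Cx := Nat.find_spec hS
        have hmin : ∀ m, m < n₀ → (e m : ℝ) ∉ Cx := fun m hm => Nat.find_min hS hm
        have hCeq : Cx = Comp n₀ := connectedComponentIn_eq hn₀
        have hgood : good n₀ := by
          refine ⟨connectedComponentIn_subset V x hn₀, fun m hm hEq => ?_⟩
          have hn₀V : (e n₀ : ℝ) ∈ V := connectedComponentIn_subset V x hn₀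
          have hcompne : (Comp n₀).Nonempty := ⟨_, mem_connectedComponentIn hn₀V⟩
          have hemV : (e m : ℝ) ∈ V := by
            by_contra hem
            have hemp : Comp m = ∅ := connectedComponentIn_eq_empty hem
            rw [hemp] at hEq
            exact hcompne.ne_empty hEq.symm
          have : (e m : ℝ) ∈ Cx := by
            rw [hCeq, ← hEq]
            exact mem_connectedComponentIn hemV
          exact hmin m hm this
        refine mem_iUnion.2 ⟨n₀, ?_⟩
        rw [← hcomp n₀ hgood, ← hCeq]
        exact hxCx
      · exact iUnion_subset hIooV
    have hdis : ∀ j k, j ≠ k → Ioo (c j) (d j) ∩ Ioo (c k) (d k) = ∅ := by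
      intro j k hjk
      by_cases hj : good j
      · by_cases hk : good k
        · rw [← hcomp j hj, ← hcomp k hk]
          have hne : Comp j ≠ Comp k := by
            rcases lt_or_gt_of_ne hjk with h | h
            · exact hk.2 j h
            · exact (hj.2 k h).symm
          rw [eq_empty_iff_forall_notMem]
          rintro z ⟨hz1, hz2⟩
          have h1 : connectedComponentIn V ((e j : ℝ)) = connectedComponentIn V z :=
            connectedComponentIn_eq hz1
          have h2 : connectedComponentIn V ((e k : ℝ)) = connectedComponentIn V z :=
            connectedComponentIn_eq hz2
          exact hne (h1.trans h2.symm)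
        · simp only [hcdef, hddef, if_neg hk, Set.Ioo_self, inter_empty]
      · simp only [hcdef, hddef, if_neg hj, Set.Ioo_self, empty_inter]
    -- selection of extremal points on each clamped interval
    have hInt : ∀ n, Ioo (c n) (d n) ∩ Icc a b ⊆ Icc (max (c n) a) (min (d n) b) := by
      rintro n x ⟨hx1, hx2⟩
      exact ⟨max_le hx1.1.le hx2.1, le_min hx1.2.le hx2.2⟩
    have hsel : ∀ n, ∃ P Q : ℝ, a ≤ P ∧ P ≤ Q ∧ Q ≤ b ∧ Ioo P Q ⊆ Icc (c n) (d n) ∧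
        Q - P ≤ max (d n - c n) 0 ∧
        volume (F '' (Ioo (c n) (d n) ∩ Icc a b)) ≤ ENNReal.ofReal (|F Q - F P|) := by
      intro n
      set J := Icc (max (c n) a) (min (d n) b) with hJ
      have hJab : J ⊆ Icc a b := Icc_subset_Icc (le_max_right _ _) (min_le_right _ _)
      by_cases hne : J.Nonempty
      · obtain ⟨p, hpJ, hpmin⟩ := isCompact_Icc.exists_isMinOn hne (hcont.mono hJab)
        obtain ⟨q, hqJ, hqmax⟩ := isCompact_Icc.exists_isMaxOn hne (hcont.mono hJab)
        have hcp : c n ≤ p := le_trans (le_max_left _ _) hpJ.1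
        have hcq : c n ≤ q := le_trans (le_max_left _ _) hqJ.1
        have hpd : p ≤ d n := le_trans hpJ.2 (min_le_left _ _)
        have hqd : q ≤ d n := le_trans hqJ.2 (min_le_left _ _)
        refine ⟨min p q, max p q, le_min (hJab hpJ).1 (hJab hqJ).1, min_le_max,
          max_le (hJab hpJ).2 (hJab hqJ).2, ?_, ?_, ?_⟩
        · intro x hx
          exact ⟨(le_min hcp hcq).trans hx.1.le, hx.2.le.trans (max_le hpd hqd)⟩
        · exact le_trans (by rcases le_total p q with h | h <;>
            [(rw [max_eq_right h, min_eq_left h]; linarith);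
             (rw [max_eq_left h, min_eq_right h]; linarith)]) (le_max_left _ _)
        · have himg : F '' (Ioo (c n) (d n) ∩ Icc a b) ⊆ Icc (F p) (F q) := by
            rintro _ ⟨z, hz, rfl⟩
            exact ⟨isMinOn_iff.1 hpmin z (hInt n hz), isMaxOn_iff.1 hqmax z (hInt n hz)⟩
          refine le_trans (measure_mono himg) ?_
          rw [Real.volume_Icc]
          apply ENNReal.ofReal_le_ofReal
          rcases le_total p q with h | h
          · rw [max_eq_right h, min_eq_left h]; exact le_abs_self _
          · rw [max_eq_left h, min_eq_right h, abs_sub_comm]; exact le_abs_self _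
      · refine ⟨a, a, le_refl a, le_refl a, hab, by simp, by simp, ?_⟩
        have : Ioo (c n) (d n) ∩ Icc a b = ∅ :=
          subset_empty_iff.1 ((hInt n).trans (not_nonempty_iff_eq_empty.1 hne).subset)
        simp [this]
    choose P Q hP hPQ hQ hIoo hlen hvol using hsel
    calc volume (F '' Z) ≤ volume (F '' (V ∩ Icc a b)) :=
          measure_mono (image_mono (subset_inter hZV hZab))
      _ ≤ ∑' n, volume (F '' (Ioo (c n) (d n) ∩ Icc a b)) := by
          rw [hcover, iUnion_inter, image_iUnion]
          exact measure_iUnion_le _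
      _ ≤ ∑' n, ENNReal.ofReal (|F (Q n) - F (P n)|) := ENNReal.tsum_le_tsum hvol
      _ ≤ ENNReal.ofReal ε := by
          rw [ENNReal.tsum_eq_iSup_sum]
          refine iSup_le fun t => ?_
          set σ := t.orderIsoOfFin rfl with hσ
          set cc : ℕ → ℝ := fun k => if h : k < t.card then P (σ ⟨k, h⟩) else a with hccdef
          set dd : ℕ → ℝ := fun k => if h : k < t.card then Q (σ ⟨k, h⟩) else a with hdddef
          have hre : ∀ f : ℕ → ℝ, ∑ k ∈ Finset.range t.card,
              (if h : k < t.card then f (σ ⟨k, h⟩) else 0) = ∑ n ∈ t, f n := by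
            intro f
            calc ∑ k ∈ Finset.range t.card, (if h : k < t.card then f (σ ⟨k, h⟩) else 0)
                = ∑ k : Fin t.card, f (σ k) := by
                  rw [← Fin.sum_univ_eq_sum_range]
                  exact Finset.sum_congr rfl fun k _ => by rw [dif_pos k.isLt]
              _ = ∑ x : ↥t, f ↑x := Fintype.sum_equiv σ.toEquiv _ _ (fun k => rfl)
              _ = ∑ n ∈ t, f n := Finset.sum_coe_sort t f
          have hkey := H t.card cc dd ?_ ?_ ?_
          · have e1 : ∑ k ∈ Finset.range t.card, |F (dd k) - F (cc k)|
                = ∑ n ∈ t, |F (Q n) - F (P n)| := by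
              rw [← hre (fun n => |F (Q n) - F (P n)|)]
              apply Finset.sum_congr rfl
              intro k hk
              have hk' := Finset.mem_range.1 hk
              simp only [hccdef, hdddef, dif_pos hk']
            rw [← ENNReal.ofReal_sum_of_nonneg (fun i _ => abs_nonneg _)]
            apply ENNReal.ofReal_le_ofReal
            rw [← e1]
            exact hkey.le
          · intro k hk
            simp only [hccdef, hdddef, dif_pos hk]
            exact ⟨hP _, hPQ _, hQ _⟩
          · intro j k hj hk hjk
            simp only [hccdef, hdddef, dif_pos hj, dif_pos hk]
            have hne : ((σ ⟨j, hj⟩ : ↥t) : ℕ) ≠ ((σ ⟨k, hk⟩ : ↥t) : ℕ) := fun h =>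
              hjk (congrArg Fin.val (σ.injective (Subtype.ext h)))
            exact Ioo_inter_Ioo_of_sub (hdis _ _ hne) (hIoo _) (hIoo _)
          · -- length bound
            have e2 : ∑ k ∈ Finset.range t.card, (dd k - cc k) = ∑ n ∈ t, (Q n - P n) := by
              rw [← hre (fun n => Q n - P n)]
              apply Finset.sum_congr rfl
              intro k hk
              have hk' := Finset.mem_range.1 hk
              simp only [hccdef, hdddef, dif_pos hk']
            rw [e2]
            have e3 : ∀ n, max (d n - c n) 0 = (volume (Ioo (c n) (d n))).toReal := by
              intro n
              rw [Real.volume_Ioo, ENNReal.toReal_ofReal']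
            have e4 : (t : Set ℕ).PairwiseDisjoint (fun n => Ioo (c n) (d n)) :=
              fun i _ j _ hij => Set.disjoint_iff_inter_eq_empty.2 (hdis i j hij)
            have e5 : volume (⋃ n ∈ t, Ioo (c n) (d n)) < ENNReal.ofReal δ := by
              refine lt_of_le_of_lt (measure_mono ?_) hVlt
              exact iUnion₂_subset fun n _ => (hIooV n)
            calc ∑ n ∈ t, (Q n - P n) ≤ ∑ n ∈ t, max (d n - c n) 0 :=
                  Finset.sum_le_sum fun n _ => hlen n
              _ = ∑ n ∈ t, (volume (Ioo (c n) (d n))).toReal := by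
                  exact Finset.sum_congr rfl fun n _ => e3 n
              _ = (∑ n ∈ t, volume (Ioo (c n) (d n))).toReal := by
                  rw [ENNReal.toReal_sum]
                  intro n _
                  rw [Real.volume_Ioo]
                  exact ENNReal.ofReal_ne_top
              _ = (volume (⋃ n ∈ t, Ioo (c n) (d n))).toReal := by
                  rw [measure_biUnion_finset e4 (fun n _ => measurableSet_Ioo)]
              _ < δ := ENNReal.toReal_lt_of_lt_ofReal e5
  refine le_antisymm ?_ zero_le
  refine ENNReal.le_of_forall_pos_le_add fun r hr _ => ?_
  rw [zero_add]
  have := key r (by exact_mod_cast hr)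
  rwa [ENNReal.ofReal_coe_nnreal] at this


/-- An absolutely continuous function with derivative zero almost everywhere is constant. -/
theorem ac_deriv_zero_ae_constant (a b : ℝ) (hab : a ≤ b) (F : ℝ → ℝ)
    (hAC : AbsolutelyContinuousOn F a b)
    (hF : ∀ᵐ x ∂(volume.restrict (Icc a b)), HasDerivAt F 0 x) :
    ∀ x ∈ Icc a b, F x = F a := by
  intro x hx
  by_contra hne
  have hcont := AC.continuousOn hAC
  have hbad : volume ({y | ¬ HasDerivAt F 0 y} ∩ Icc a b) = 0 := by
    have h0 := ae_iff.1 hF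
    rwa [Measure.restrict_apply' measurableSet_Icc] at h0
  obtain ⟨N, hNsub, hNmeas, hN0⟩ := exists_measurable_superset_of_null hbad
  set s := Icc a x \ N with hs
  have hsmeas : MeasurableSet s := measurableSet_Icc.diff hNmeas
  have hsub : Icc a x ⊆ Icc a b := Icc_subset_Icc_right hx.2
  have hderiv : ∀ y ∈ s, HasFDerivWithinAt F (0 : ℝ →L[ℝ] ℝ) s y := by
    intro y hy
    have hyd : HasDerivAt F 0 y := by
      by_contra h
      exact hy.2 (hNsub ⟨h, hsub hy.1⟩)
    have := hyd.hasFDerivAt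
    rw [← ContinuousLinearMap.smulRight_one_eq_toSpanSingleton] at this
    have h2 : ContinuousLinearMap.smulRight (1 : ℝ →L[ℝ] ℝ) (0 : ℝ) = 0 := by
      ext; simp
    rw [h2] at this
    exact this.hasFDerivWithinAt
  have h1 : volume (F '' s) = 0 := by
    have hle := MeasureTheory.addHaar_image_le_lintegral_abs_det_fderiv volume hsmeas
      (f' := fun _ => (0 : ℝ →L[ℝ] ℝ)) hderiv
    refine le_antisymm (hle.trans (le_of_eq ?_)) zero_le
    have hdet : (0 : ℝ →L[ℝ] ℝ).det = 0 := by
      simp [ContinuousLinearMap.det]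
    simp [hdet]
  have h2 : volume (F '' (Icc a x \ s)) = 0 := by
    have heq : Icc a x \ s = Icc a x ∩ N := diff_diff_right_self _ _
    refine luzinN hab hAC (fun y hy => ?_) ?_
    · exact hsub (heq ▸ hy : y ∈ Icc a x ∩ N).1
    · exact le_antisymm (le_trans (measure_mono (heq ▸ inter_subset_right)) hN0.le) zero_le
  have h3 : volume (F '' Icc a x) = 0 := by
    have hcup : Icc a x = s ∪ (Icc a x \ s) :=
      (union_diff_cancel (diff_subset : s ⊆ Icc a x)).symm
    refine le_antisymm ?_ zero_le
    calc volume (F '' Icc a x) = volume (F '' (s ∪ (Icc a x \ s))) := by rw [← hcup]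
      _ ≤ volume (F '' s ∪ F '' (Icc a x \ s)) := by rw [image_union]
      _ ≤ volume (F '' s) + volume (F '' (Icc a x \ s)) := measure_union_le _ _
      _ = 0 := by rw [h1, h2, add_zero]
  have hIVT : uIcc (F a) (F x) ⊆ F '' Icc a x := by
    have := intermediate_value_uIcc (hcont.mono (uIcc_of_le hx.1 ▸ hsub))
    rwa [uIcc_of_le hx.1] at this
  have : volume (uIcc (F a) (F x)) = 0 :=
    le_antisymm (le_trans (measure_mono hIVT) h3.le) zero_le
  rw [Real.volume_interval] at this
  have habs : |F x - F a| > 0 := abs_pos.2 (sub_ne_zero.2 hne)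
  rw [ENNReal.ofReal_eq_zero] at this
  linarith
end

section
/- If F : [a,b] → ℝ is continuous and its right derivative F'₊(x) exists and equals 0 for all x in [a,b) except possibly a countable set, then F is constant on [a,b]. -/
open Set

/-- If `F` is continuous on `[a, b]` and its right derivative exists and equals `0`
nearly everywhere (off a countable set) on `[a, b)`, then `F` is constant. -/
theorem constant_of_right_deriv_zero_nearly_everywhere (a b : ℝ) (hab : a < b)
    (F : ℝ → ℝ) (hFc : ContinuousOn F (Icc a b))
    (s : Set ℝ) (hs : s.Countable)
    (hF : ∀ x ∈ Ico a b \ s, HasDerivWithinAt F 0 (Ici x) x) :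
    ∀ x ∈ Icc a b, F x = F a := by
  obtain ⟨c, hc⟩ : ∃ c : ℕ → ℝ, s ⊆ Set.range c := by
    obtain ⟨c, hc⟩ := (hs.insert a).exists_eq_range (insert_nonempty _ _)
    exact ⟨c, (subset_insert a s).trans hc.subset⟩
  set W : ℝ → ℝ := fun y => ∑' n : ℕ, if c n < y then (1/2:ℝ)^n else 0 with hWdef
  have hsumm : ∀ y, Summable (fun n : ℕ => if c n < y then (1/2:ℝ)^n else 0) := by
    intro y
    refine Summable.of_nonneg_of_le ?_ ?_ summable_geometric_two
    · intro n; split <;> positivity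
    · intro n; split
      · exact le_refl _
      · positivity
  have hW0 : ∀ u, 0 ≤ W u := by
    intro u
    apply tsum_nonneg
    intro n; split <;> positivity
  have hW2 : ∀ u, W u ≤ 2 := by
    intro u
    refine le_trans (Summable.tsum_le_tsum ?_ (hsumm u) summable_geometric_two) tsum_geometric_two.le
    intro n; split
    · exact le_refl _
    · positivity
  have hWmono : ∀ {u v : ℝ}, u ≤ v → W u ≤ W v := by
    intro u v huv
    apply Summable.tsum_le_tsum _ (hsumm u) (hsumm v)
    intro n
    by_cases h : c n < u
    · simp [h, lt_of_lt_of_le h huv]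
    · simp only [h, if_false]
      split <;> positivity
  have hWjump : ∀ {u v : ℝ} (n : ℕ), u ≤ c n → c n < v → W u + (1/2:ℝ)^n ≤ W v := by
    intro u v n hu hv
    have hsub : W v - W u = ∑' m : ℕ,
        ((if c m < v then (1/2:ℝ)^m else 0) - (if c m < u then (1/2:ℝ)^m else 0)) :=
      (Summable.tsum_sub (hsumm v) (hsumm u)).symm
    have hle : (1/2:ℝ)^n ≤ W v - W u := by
      rw [hsub]
      have h1 : ((if c n < v then (1/2:ℝ)^n else 0) - (if c n < u then (1/2:ℝ)^n else 0))
          = (1/2:ℝ)^n := by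
        rw [if_pos hv, if_neg (not_lt.mpr hu), sub_zero]
      refine h1 ▸ Summable.le_tsum ((hsumm v).sub (hsumm u)) n ?_
      intro m _
      have : u ≤ v := le_trans hu hv.le
      by_cases h : c m < u
      · simp [h, lt_of_lt_of_le h this]
      · simp only [h, if_false, sub_zero]
        split <;> positivity
    linarith
  have key : ∀ ε > (0:ℝ), ∀ x ∈ Icc a b, |F x - F a| ≤ ε * (x - a) + ε * (W x - W a) := by
    intro ε hε x hx
    set A := {y | y ∈ Icc a x ∧ |F y - F a| ≤ ε * (y - a) + ε * (W y - W a)} with hA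
    have haA : a ∈ A := by
      refine ⟨⟨le_refl a, hx.1⟩, ?_⟩
      simp
    have hAx : ∀ y ∈ A, y ≤ x := fun y hy => hy.1.2
    have hbdd : BddAbove A := ⟨x, hAx⟩
    have hne : A.Nonempty := ⟨a, haA⟩
    set z := sSup A with hz
    have hzmem : z ∈ Icc a x := ⟨le_csSup hbdd haA, csSup_le hne hAx⟩
    have hzIcc : z ∈ Icc a b := ⟨hzmem.1, hzmem.2.trans hx.2⟩
    have hzA : z ∈ A := by
      refine ⟨hzmem, ?_⟩
      by_contra hlt
      push_neg at hlt
      set δ := |F z - F a| - (ε * (z - a) + ε * (W z - W a)) with hδ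
      have hδpos : 0 < δ := by simp only [hδ]; linarith
      have hco := hFc z hzIcc
      rw [Metric.continuousWithinAt_iff] at hco
      obtain ⟨d, hd, hdp⟩ := hco δ hδpos
      obtain ⟨y, hyA, hy⟩ := exists_lt_of_lt_csSup hne (show z - d < z by linarith)
      have hyz : y ≤ z := le_csSup hbdd hyA
      have hyIcc : y ∈ Icc a b := ⟨hyA.1.1, (hyA.1.2).trans hx.2⟩
      have hdist : dist y z < d := by
        rw [Real.dist_eq, abs_lt]; constructor <;> linarith
      have hFyz := hdp hyIcc hdist
      rw [Real.dist_eq] at hFyz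
      have htri : |F z - F a| ≤ |F z - F y| + |F y - F a| := abs_sub_le _ _ _
      have hWyz : W y ≤ W z := hWmono hyz
      have habs : |F z - F y| = |F y - F z| := abs_sub_comm _ _
      have h1 : ε * (y - a) ≤ ε * (z - a) :=
        mul_le_mul_of_nonneg_left (by linarith) hε.le
      have h2 : ε * (W y - W a) ≤ ε * (W z - W a) :=
        mul_le_mul_of_nonneg_left (by linarith) hε.le
      have := hyA.2
      simp only [hδ] at hFyz
      linarith
    rcases eq_or_lt_of_le hzmem.2 with heq | hlt
    · exact heq ▸ hzA.2
    · exfalso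
      have hzb : z < b := lt_of_lt_of_le hlt hx.2
      suffices hy : ∃ y, y ∈ A ∧ z < y by
        obtain ⟨y, hyA, hzy⟩ := hy
        exact absurd (le_csSup hbdd hyA) (not_le.mpr hzy)
      by_cases hzs : z ∈ Set.range c
      · obtain ⟨n, hn⟩ := hzs
        have hco := hFc z hzIcc
        rw [Metric.continuousWithinAt_iff] at hco
        obtain ⟨d, hd, hdp⟩ := hco (ε * (1/2:ℝ)^n) (by positivity)
        set y := min (z + d/2) x with hy
        have hyx : y ≤ x := min_le_right _ _
        have hzy : z < y := lt_min (by linarith) hlt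
        have hyIcc : y ∈ Icc a b := ⟨hzIcc.1.trans hzy.le, hyx.trans hx.2⟩
        have hdist : dist y z < d := by
          rw [Real.dist_eq, abs_lt]
          have : y ≤ z + d/2 := min_le_left _ _
          constructor <;> linarith
        have hF1 := hdp hyIcc hdist
        rw [Real.dist_eq] at hF1
        refine ⟨y, ⟨⟨hzIcc.1.trans hzy.le, hyx⟩, ?_⟩, hzy⟩
        have hjump : W z + (1/2:ℝ)^n ≤ W y := hWjump n hn.ge (hn ▸ hzy)
        have htri : |F y - F a| ≤ |F y - F z| + |F z - F a| := abs_sub_le _ _ _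
        have hza := hzA.2
        have h1 : ε * (z - a) ≤ ε * (y - a) :=
          mul_le_mul_of_nonneg_left (by linarith) hε.le
        have h2 : ε * (W z - W a) + ε * (1/2:ℝ)^n ≤ ε * (W y - W a) := by
          have := mul_le_mul_of_nonneg_left (show W z + (1/2:ℝ)^n - W a ≤ W y - W a by linarith) hε.le
          linarith [this]
        linarith
      · have hder := hF z ⟨⟨hzIcc.1, hzb⟩, fun h => hzs (hc h)⟩
        rw [hasDerivWithinAt_iff_tendsto_slope] at hder
        have h1 : ∀ᶠ w in nhdsWithin z (Ici z \ {z}), |slope F z w| < ε := by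
          have := hder (Metric.ball_mem_nhds (0:ℝ) hε)
          filter_upwards [this] with w hw
          simpa [Real.dist_eq] using hw
        have h2 : nhdsWithin z (Ioi z) ≤ nhdsWithin z (Ici z \ {z}) :=
          nhdsWithin_mono z (fun w hw => ⟨Set.mem_Ici.mpr (le_of_lt hw), by simp only [mem_singleton_iff]; exact ne_of_gt hw⟩)
        have h3 : Ioc z x ∈ nhdsWithin z (Ioi z) :=
          Ioc_mem_nhdsGT_of_mem ⟨le_refl z, hlt⟩
        have h3E : ∀ᶠ w in nhdsWithin z (Ioi z), w ∈ Ioc z x :=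
          Filter.eventually_iff.mpr h3
        obtain ⟨y, hy1, hy2⟩ := ((h1.filter_mono h2).and h3E).exists
        have hzy : z < y := hy2.1
        have hslope : |F y - F z| ≤ ε * (y - z) := by
          rw [slope_def_field] at hy1
          rw [abs_div, abs_of_pos (by linarith : (0:ℝ) < y - z)] at hy1
          have := (div_lt_iff₀ (by linarith : (0:ℝ) < y - z)).mp hy1
          linarith
        refine ⟨y, ⟨⟨hzIcc.1.trans hzy.le, hy2.2⟩, ?_⟩, hzy⟩
        have htri : |F y - F a| ≤ |F y - F z| + |F z - F a| := abs_sub_le _ _ _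
        have hza := hzA.2
        have hWzy : W z ≤ W y := hWmono hzy.le
        have h4 : ε * (W z - W a) ≤ ε * (W y - W a) :=
          mul_le_mul_of_nonneg_left (by linarith) hε.le
        nlinarith
  intro x hx
  have hC : ∀ ε > (0:ℝ), |F x - F a| ≤ ε * ((b - a) + 2) := by
    intro ε hε
    refine (key ε hε x hx).trans ?_
    have hWb : W x - W a ≤ 2 := by linarith [hW2 x, hW0 a]
    have hxa : x - a ≤ b - a := by linarith [hx.2]
    nlinarith
  have habs : |F x - F a| ≤ 0 := by
    by_contra h
    push_neg at h
    have hCpos : (0:ℝ) < (b - a) + 2 := by linarith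
    have hthis := hC (|F x - F a| / (2 * ((b - a) + 2))) (by positivity)
    have heq : (|F x - F a| / (2 * ((b - a) + 2))) * ((b - a) + 2) = |F x - F a| / 2 := by
      field_simp
    rw [heq] at hthis
    linarith
  have := abs_nonpos_iff.mp habs
  linarith [sub_eq_zero.mp this, this]
end

section
/- If F : [a,b] → ℝ is continuous, differentiable at all but countably many points of [a,b], and F'(x) = 0 for almost every x in [a,b], then F is constant on [a,b]. -/
open Set MeasureTheory

/-- If `F` is continuous on `[a, b]`, differentiable off a countable set, and `F' = 0`
almost everywhere, then `F` is constant. -/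
theorem constant_of_nearly_differentiable_deriv_zero_ae (a b : ℝ) (hab : a < b)
    (F : ℝ → ℝ) (hFc : ContinuousOn F (Icc a b))
    (s : Set ℝ) (hs : s.Countable)
    (hdiff : ∀ x ∈ Icc a b \ s, DifferentiableAt ℝ F x)
    (hF : ∀ᵐ x ∂(volume.restrict (Icc a b)), deriv F x = 0) :
    ∀ x ∈ Icc a b, F x = F a := by
  intro x hx
  have hax : a ≤ x := hx.1
  have hzero : deriv F =ᵐ[volume.restrict (Ioc a x)] (fun _ => 0) := by
    have hmono : volume.restrict (Ioc a x) ≤ volume.restrict (Icc a b) := by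
      apply Measure.restrict_mono _ le_rfl
      exact fun y hy => ⟨le_of_lt hy.1, hy.2.trans hx.2⟩
    exact (Measure.absolutelyContinuous_of_le hmono).ae_le hF
  have hInt : IntervalIntegrable (deriv F) volume a x := by
    rw [intervalIntegrable_iff_integrableOn_Ioc_of_le hax]
    exact (integrableOn_zero (s := Ioc a x)).congr_fun_ae hzero.symm
  have hFTC : ∫ y in a..x, deriv F y = F x - F a := by
    apply integral_eq_of_hasDerivAt_off_countable_of_le F (deriv F) hax hs
    · exact hFc.mono (Icc_subset_Icc le_rfl hx.2)
    · intro y hy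
      exact (hdiff y ⟨⟨hy.1.1.le, hy.1.2.le.trans hx.2⟩, hy.2⟩).hasDerivAt
    · exact hInt
  have hZ : ∫ y in a..x, deriv F y = 0 := by
    rw [intervalIntegral.integral_of_le hax]
    rw [integral_congr_ae hzero]
    simp
  have := hFTC.symm.trans hZ
  linarith
end

section
/- Let K be the generalized Cantor set on [a,b] constructed with removal ratios εₙ ∈ (0,1): at stage n, the open middle interval of relative length εₙ is removed from each of the 2^{n-1} remaining closed intervals. Then the Lebesgue measure of K equals (b−a)·∏_{k=1}^∞ (1−ε_k). In particular, K has positive measure if Σ ε_k < ∞ and measure zero if Σ ε_k = ∞. -/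
open Set MeasureTheory Filter

/-- Length of each of the `2^n` closed intervals remaining at stage `n` of the
generalized Cantor construction on `[a, b]` with removal ratios `e`. -/
noncomputable def cantorLen (a b : ℝ) (e : ℕ → ℝ) : ℕ → ℝ
  | 0 => b - a
  | n + 1 => cantorLen a b e n * (1 - e n) / 2

/-- Left endpoint of the stage-`n` interval indexed by a binary string `s`. -/
noncomputable def cantorLeft (a b : ℝ) (e : ℕ → ℝ) {n : ℕ} (s : Fin n → Bool) : ℝ :=
  a + ∑ k : Fin n, if s k then cantorLen a b e k - cantorLen a b e (k + 1) else 0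

/-- The generalized Cantor set on `[a, b]` with removal ratios `e`: at each stage the
open middle interval of relative length `e n` is removed from each remaining interval. -/
noncomputable def genCantorSet (a b : ℝ) (e : ℕ → ℝ) : Set ℝ :=
  ⋂ n : ℕ, ⋃ s : Fin n → Bool,
    Icc (cantorLeft a b e s) (cantorLeft a b e s + cantorLen a b e n)

section Aux

variable (a b : ℝ) (e : ℕ → ℝ)

/-- The stage-`n` set of the construction. -/
noncomputable def cantorStage (n : ℕ) : Set ℝ :=
  ⋃ s : Fin n → Bool,
    Icc (cantorLeft a b e s) (cantorLeft a b e s + cantorLen a b e n)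

lemma genCantorSet_eq_iInter : genCantorSet a b e = ⋂ n, cantorStage a b e n := rfl

variable {a b e}
variable (hab : a < b) (he : ∀ n, 0 < e n ∧ e n < 1)

include hab he in
lemma cantorLen_pos (n : ℕ) : 0 < cantorLen a b e n := by
  induction n with
  | zero => simpa [cantorLen] using sub_pos.2 hab
  | succ n ih =>
    have h1 : 0 < 1 - e n := by linarith [(he n).2]
    simp only [cantorLen]
    positivity

include hab he in
lemma cantorLen_succ_le (n : ℕ) : cantorLen a b e (n + 1) ≤ cantorLen a b e n := by
  have h := cantorLen_pos hab he n
  have h1 := (he n).1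
  have h2 := (he n).2
  show cantorLen a b e n * (1 - e n) / 2 ≤ cantorLen a b e n
  nlinarith

lemma two_pow_mul_cantorLen (n : ℕ) :
    (2 : ℝ) ^ n * cantorLen a b e n = (b - a) * ∏ k ∈ Finset.range n, (1 - e k) := by
  induction n with
  | zero => simp [cantorLen]
  | succ n ih =>
    rw [Finset.prod_range_succ, ← mul_assoc, ← ih]
    show (2:ℝ)^(n+1) * (cantorLen a b e n * (1 - e n) / 2) = _
    ring

include hab he in
lemma two_pow_mul_cantorLen_le (n : ℕ) : (2 : ℝ) ^ n * cantorLen a b e n ≤ b - a := by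
  rw [two_pow_mul_cantorLen]
  have hprod : ∏ k ∈ Finset.range n, (1 - e k) ≤ 1 := by
    apply Finset.prod_le_one
    · intro k _; linarith [(he k).2]
    · intro k _; linarith [(he k).1]
  have hprodnn : 0 ≤ ∏ k ∈ Finset.range n, (1 - e k) :=
    Finset.prod_nonneg fun k _ => by linarith [(he k).2]
  nlinarith [sub_pos.2 hab]

lemma cantorLeft_snoc {n : ℕ} (s : Fin n → Bool) (bit : Bool) :
    cantorLeft a b e (Fin.snoc s bit) =
      cantorLeft a b e s +
        (if bit then cantorLen a b e n - cantorLen a b e (n + 1) else 0) := by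
  unfold cantorLeft
  rw [Fin.sum_univ_castSucc]
  simp only [Fin.snoc_castSucc, Fin.snoc_last, Fin.coe_castSucc, Fin.val_last]
  ring

include hab he in
lemma cantorStage_antitone : Antitone (cantorStage a b e) := by
  apply antitone_nat_of_succ_le
  intro n x hx
  simp only [cantorStage, mem_iUnion] at hx ⊢
  obtain ⟨s, hx⟩ := hx
  refine ⟨Fin.init s, ?_⟩
  have hs : s = Fin.snoc (Fin.init s) (s (Fin.last n)) := (Fin.snoc_init_self s).symm
  rw [hs, cantorLeft_snoc] at hx
  have hle := cantorLen_succ_le hab he n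
  have hpos := cantorLen_pos hab he (n + 1)
  obtain ⟨h1, h2⟩ := hx
  by_cases hb : s (Fin.last n) = true
  · rw [if_pos hb] at h1 h2
    exact ⟨by linarith, by linarith⟩
  · rw [if_neg hb] at h1 h2
    exact ⟨by linarith, by linarith⟩

include hab he in
lemma volume_cantorStage_le (n : ℕ) :
    volume (cantorStage a b e n) ≤ ENNReal.ofReal ((2:ℝ)^n * cantorLen a b e n) := by
  calc volume (cantorStage a b e n)
      ≤ ∑ s : Fin n → Bool, volume
          (Icc (cantorLeft a b e s) (cantorLeft a b e s + cantorLen a b e n)) :=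
        measure_iUnion_fintype_le _ _
    _ = ENNReal.ofReal ((2:ℝ)^n * cantorLen a b e n) := by
        simp only [Real.volume_Icc, add_sub_cancel_left]
        rw [Finset.sum_const, Finset.card_univ, Fintype.card_fun, Fintype.card_bool,
          Fintype.card_fin, nsmul_eq_mul, ENNReal.ofReal_mul (by positivity),
          ← ENNReal.ofReal_natCast]
        push_cast
        ring_nf

include hab he in
lemma volume_compl_cantorStage_le (n : ℕ) :
    volume (Icc a b \ cantorStage a b e n) ≤
      ENNReal.ofReal ((b - a) - (2:ℝ)^n * cantorLen a b e n) := by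
  induction n with
  | zero =>
    have : Icc a b \ cantorStage a b e 0 = ∅ := by
      rw [diff_eq_empty]
      intro x hx
      simp only [cantorStage, mem_iUnion]
      refine ⟨default, ?_⟩
      simp only [cantorLeft, cantorLen, Finset.univ_eq_empty, Finset.sum_empty, add_zero]
      simpa using hx
    simp [this]
  | succ n ih =>
    set M : Set ℝ := ⋃ s : Fin n → Bool,
      Icc (cantorLeft a b e s + cantorLen a b e (n+1))
        (cantorLeft a b e s + (cantorLen a b e n - cantorLen a b e (n+1))) with hM
    have hsub : Icc a b \ cantorStage a b e (n+1) ⊆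
        (Icc a b \ cantorStage a b e n) ∪ M := by
      intro x hx
      obtain ⟨hxab, hxn1⟩ := hx
      by_cases hxn : x ∈ cantorStage a b e n
      · right
        simp only [cantorStage, mem_iUnion] at hxn
        obtain ⟨s, hx1, hx2⟩ := hxn
        simp only [hM, mem_iUnion]
        refine ⟨s, ?_, ?_⟩
        · -- x ≥ left s + len (n+1): else x would be in the left child
          by_contra hcon
          push_neg at hcon
          apply hxn1
          simp only [cantorStage, mem_iUnion]
          refine ⟨Fin.snoc s false, ?_⟩
          rw [cantorLeft_snoc]
          simp only [Bool.false_eq_true, if_false, add_zero]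
          exact ⟨hx1, le_of_lt hcon⟩
        · by_contra hcon
          push_neg at hcon
          apply hxn1
          simp only [cantorStage, mem_iUnion]
          refine ⟨Fin.snoc s true, ?_⟩
          rw [cantorLeft_snoc]
          simp only [if_pos rfl, if_true]
          constructor <;> [linarith; linarith]
      · exact Or.inl ⟨hxab, hxn⟩
    have hMvol : volume M ≤
        ENNReal.ofReal ((2:ℝ)^n * (cantorLen a b e n - 2 * cantorLen a b e (n+1))) := by
      calc volume M ≤ ∑ s : Fin n → Bool, volume
            (Icc (cantorLeft a b e s + cantorLen a b e (n+1))
              (cantorLeft a b e s + (cantorLen a b e n - cantorLen a b e (n+1)))) :=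
            measure_iUnion_fintype_le _ _
        _ = ENNReal.ofReal ((2:ℝ)^n * (cantorLen a b e n - 2 * cantorLen a b e (n+1))) := by
            have harg : ∀ s : Fin n → Bool,
                (cantorLeft a b e s + (cantorLen a b e n - cantorLen a b e (n+1))) -
                  (cantorLeft a b e s + cantorLen a b e (n+1)) =
                cantorLen a b e n - 2 * cantorLen a b e (n+1) := fun s => by ring
            simp only [Real.volume_Icc, harg]
            rw [Finset.sum_const, Finset.card_univ, Fintype.card_fun, Fintype.card_bool,
              Fintype.card_fin, nsmul_eq_mul, ENNReal.ofReal_mul (by positivity),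
              ← ENNReal.ofReal_natCast]
            push_cast
            ring_nf
    calc volume (Icc a b \ cantorStage a b e (n+1))
        ≤ volume ((Icc a b \ cantorStage a b e n) ∪ M) := measure_mono hsub
      _ ≤ volume (Icc a b \ cantorStage a b e n) + volume M := measure_union_le _ _
      _ ≤ ENNReal.ofReal ((b - a) - (2:ℝ)^n * cantorLen a b e n) +
            ENNReal.ofReal ((2:ℝ)^n * (cantorLen a b e n - 2 * cantorLen a b e (n+1))) :=
          add_le_add ih hMvol
      _ = ENNReal.ofReal ((b - a) - (2:ℝ)^(n+1) * cantorLen a b e (n+1)) := by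
          rw [← ENNReal.ofReal_add]
          · congr 1; ring
          · linarith [two_pow_mul_cantorLen_le hab he n]
          · have h2 : cantorLen a b e n - 2 * cantorLen a b e (n+1) = cantorLen a b e n * e n := by
              show cantorLen a b e n - 2 * (cantorLen a b e n * (1 - e n) / 2) = _
              ring
            rw [h2]
            have := cantorLen_pos hab he n
            have := (he n).1
            positivity

include hab he in
lemma volume_cantorStage (n : ℕ) :
    volume (cantorStage a b e n) = ENNReal.ofReal ((2:ℝ)^n * cantorLen a b e n) := by
  refine le_antisymm (volume_cantorStage_le hab he n) ?_
  have hcover : Icc a b ⊆ cantorStage a b e n ∪ (Icc a b \ cantorStage a b e n) := by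
    intro x hx
    by_cases h : x ∈ cantorStage a b e n
    · exact Or.inl h
    · exact Or.inr ⟨hx, h⟩
  have h1 : ENNReal.ofReal (b - a) ≤
      volume (cantorStage a b e n) + ENNReal.ofReal ((b - a) - (2:ℝ)^n * cantorLen a b e n) := by
    calc ENNReal.ofReal (b - a) = volume (Icc a b) := (Real.volume_Icc).symm
      _ ≤ volume (cantorStage a b e n ∪ (Icc a b \ cantorStage a b e n)) := measure_mono hcover
      _ ≤ volume (cantorStage a b e n) + volume (Icc a b \ cantorStage a b e n) :=
          measure_union_le _ _
      _ ≤ _ := add_le_add le_rfl (volume_compl_cantorStage_le hab he n)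
  have hnn : (0:ℝ) ≤ (b - a) - (2:ℝ)^n * cantorLen a b e n := by
    linarith [two_pow_mul_cantorLen_le hab he n]
  have key : ENNReal.ofReal ((2:ℝ)^n * cantorLen a b e n) =
      ENNReal.ofReal (b - a) - ENNReal.ofReal ((b - a) - (2:ℝ)^n * cantorLen a b e n) := by
    rw [← ENNReal.ofReal_sub _ hnn]
    congr 1; ring
  rw [key]
  exact tsub_le_iff_right.2 h1

include hab he in
lemma volume_genCantorSet_tendsto :
    Tendsto (fun n => ENNReal.ofReal ((b - a) * ∏ k ∈ Finset.range n, (1 - e k)))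
      atTop (nhds (volume (genCantorSet a b e))) := by
  have hmeas : ∀ n, NullMeasurableSet (cantorStage a b e n) volume := fun n =>
    (MeasurableSet.iUnion fun s => measurableSet_Icc).nullMeasurableSet
  have hfin : ∃ n, volume (cantorStage a b e n) ≠ ⊤ :=
    ⟨0, by rw [volume_cantorStage hab he 0]; exact ENNReal.ofReal_ne_top⟩
  have h := tendsto_measure_iInter_atTop hmeas (cantorStage_antitone hab he) hfin
  rw [← genCantorSet_eq_iInter] at h
  convert h using 2 with n
  rw [Function.comp_apply, volume_cantorStage hab he n, two_pow_mul_cantorLen]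

include hab he in
theorem genCantorSet_measure_aux (L : ℝ)
    (hL : Tendsto (fun n => ∏ k ∈ Finset.range n, (1 - e k)) atTop (nhds L)) :
    volume (genCantorSet a b e) = ENNReal.ofReal ((b - a) * L) := by
  have h2 : Tendsto (fun n => ENNReal.ofReal ((b - a) * ∏ k ∈ Finset.range n, (1 - e k)))
      atTop (nhds (ENNReal.ofReal ((b - a) * L))) :=
    (ENNReal.continuous_ofReal.tendsto _).comp (hL.const_mul (b - a))
  exact tendsto_nhds_unique (volume_genCantorSet_tendsto hab he) h2

end Aux

/-- The measure of the generalized Cantor set is `(b - a) ∏ (1 - e k)`; in particular it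
is positive when `∑ e k < ∞` and zero when `∑ e k = ∞`. -/
theorem genCantorSet_measure (a b : ℝ) (hab : a < b) (e : ℕ → ℝ)
    (he : ∀ n, 0 < e n ∧ e n < 1) :
    (∀ L : ℝ, Tendsto (fun n => ∏ k ∈ Finset.range n, (1 - e k)) atTop (nhds L) →
      volume (genCantorSet a b e) = ENNReal.ofReal ((b - a) * L)) ∧
    (Summable e → 0 < volume (genCantorSet a b e)) ∧
    (¬ Summable e → volume (genCantorSet a b e) = 0) := by
  have hepos : ∀ n, 0 < e n := fun n => (he n).1
  have h1pos : ∀ n, 0 < 1 - e n := fun n => by linarith [(he n).2]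
  refine ⟨fun L hL => genCantorSet_measure_aux hab he L hL, ?_, ?_⟩
  · -- summable case
    intro hs
    -- log (1 - e k) is summable
    have hlog : Summable (fun k => Real.log (1 - e k)) := by
      apply Summable.of_norm_bounded_eventually_nat (g := fun k => 2 * e k) (hs.mul_left 2)
      have hev : ∀ᶠ k in atTop, e k ≤ 1/2 :=
        hs.tendsto_atTop_zero.eventually (eventually_le_nhds (by norm_num))
      filter_upwards [hev] with k hk
      have h1 : (0:ℝ) < 1 - e k := h1pos k
      have hlogle : Real.log (1 - e k) ≤ 0 := Real.log_nonpos (by linarith [hepos k]) (by linarith [hepos k])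
      rw [Real.norm_eq_abs, abs_of_nonpos hlogle]
      have hinv : Real.log ((1 - e k)⁻¹) ≤ (1 - e k)⁻¹ - 1 :=
        Real.log_le_sub_one_of_pos (inv_pos.2 h1)
      rw [Real.log_inv] at hinv
      have hmul : (1 - e k) * (1 - e k)⁻¹ = 1 := mul_inv_cancel₀ (ne_of_gt h1)
      nlinarith [hepos k]
    set S := ∑' k, Real.log (1 - e k) with hS
    have hprod : Tendsto (fun n => ∏ k ∈ Finset.range n, (1 - e k)) atTop (nhds (Real.exp S)) := by
      have hsum : Tendsto (fun n => ∑ k ∈ Finset.range n, Real.log (1 - e k)) atTop (nhds S) :=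
        hlog.hasSum.tendsto_sum_nat
      have := (Real.continuous_exp.tendsto S).comp hsum
      convert this using 2 with n
      rw [Function.comp_apply, Real.exp_sum]
      exact Finset.prod_congr rfl fun k _ => (Real.exp_log (h1pos k)).symm
    rw [genCantorSet_measure_aux hab he _ hprod]
    apply ENNReal.ofReal_pos.2
    have := Real.exp_pos S
    nlinarith [sub_pos.2 hab]
  · -- non-summable case
    intro hns
    have hsum_top : Tendsto (fun n => ∑ k ∈ Finset.range n, e k) atTop atTop :=
      (not_summable_iff_tendsto_nat_atTop_of_nonneg (fun n => (hepos n).le)).1 hns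
    have hlogsum : Tendsto (fun n => ∑ k ∈ Finset.range n, Real.log (1 - e k)) atTop atBot := by
      apply tendsto_atBot_mono (f := fun n => -∑ k ∈ Finset.range n, e k)
      · intro n
        calc ∑ k ∈ Finset.range n, Real.log (1 - e k)
            ≤ ∑ k ∈ Finset.range n, (-(e k)) := by
              apply Finset.sum_le_sum
              intro k _
              have := Real.log_le_sub_one_of_pos (h1pos k)
              linarith
          _ = -∑ k ∈ Finset.range n, e k := by rw [Finset.sum_neg_distrib]
      · exact tendsto_neg_atTop_atBot.comp hsum_top
    have hprod : Tendsto (fun n => ∏ k ∈ Finset.range n, (1 - e k)) atTop (nhds 0) := by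
      have := Real.tendsto_exp_atBot.comp hlogsum
      convert this using 2 with n
      rw [Function.comp_apply, Real.exp_sum]
      exact Finset.prod_congr rfl fun k _ => (Real.exp_log (h1pos k)).symm
    rw [genCantorSet_measure_aux hab he _ hprod]
    simp
end
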